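/- arXiv:1904.06068 — 2 statements merged into one kernel-verified Lean document; each statement's English description precedes it below -/
import Mathlib

section
/- Let y ∈ L¹(0,1) with decreasing rearrangement λ(y), and let x ∈ Ω(y). Suppose there exist 0 < s₁ < s₂ < s₃ < s₄ < 1 with λ(s_{i+1}; x) < λ(s_i; x) for i = 1, 2, 3, and ∫₀^{s₁} λ(t; x) dt + λ(s₁; x)(s − s₁) ≤ ∫₀ˢ λ(t; y) dt for all s ∈ [s₁, s₄]. Then x is not an extreme point of Ω(y). -/
/-!
Replace `x` by a measurable representative `f`. Its rearrangement `rr f` is equimeasurable with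
`f`, so `∫₀¹ rr f = ∫₀¹ f`. Pick levels `rr f s₄ < a < rr f s₃` and `rr f s₂ < b < rr f s₁`.
Near the levels `rr f s₂` and `rr f s₃` the function `f` takes values in `(a, b]` on two disjoint
sets of positive measure, and a small mean-zero `h` supported on them changes the values of
`f ± h` only inside `(a, b]`. Such a change keeps the distribution function at all levels outside
`[a, b)`, hence keeps `rr` on `(0, s₁]` and on `[s₄, 1)`, and it keeps the total integral. On
`[s₁, s₄]` monotonicity gives `∫₀ˢ rr (f ± h) ≤ ∫₀^s₁ rr f + rr f s₁ * (s - s₁)`, which the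
hypothesis bounds by `∫₀ˢ rr y`. So `f + h` and `f - h` lie in `Ω(y)`, and `x` is their midpoint.
-/

open MeasureTheory Set

/-- The decreasing rearrangement (spectral scale) of `f` on `(0,1)`. -/
noncomputable def rr (f : ℝ → ℝ) (t : ℝ) : ℝ :=
  sInf {s : ℝ | volume {u ∈ Ioo (0:ℝ) 1 | s < f u} ≤ ENNReal.ofReal t}

/-- Hardy–Littlewood–Pólya majorisation `g ≺ f` on `(0,1)`. -/
def Maj (g f : ℝ → ℝ) : Prop :=
  (∀ s ∈ Ico (0:ℝ) 1, (∫ t in Ioo (0:ℝ) s, rr g t) ≤ ∫ t in Ioo (0:ℝ) s, rr f t) ∧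
    (∫ t in Ioo (0:ℝ) 1, rr g t) = ∫ t in Ioo (0:ℝ) 1, rr f t

/-- The orbit `Ω(y)` of all integrable functions on `(0,1)` majorised by `y`. -/
def Omega (y : ℝ → ℝ) : Set (ℝ → ℝ) :=
  {x | IntegrableOn x (Ioo (0:ℝ) 1) ∧ Maj x y}

/-- `x` is an extreme point of the convex set `Ω` (functions identified a.e. on `(0,1)`). -/
def ExtremePt (Ω : Set (ℝ → ℝ)) (x : ℝ → ℝ) : Prop :=
  x ∈ Ω ∧ ∀ x₁ ∈ Ω, ∀ x₂ ∈ Ω,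
    (∀ᵐ u ∂(volume.restrict (Ioo (0:ℝ) 1)), x u = (x₁ u + x₂ u) / 2) →
    (∀ᵐ u ∂(volume.restrict (Ioo (0:ℝ) 1)), x₁ u = x₂ u)


open ENNReal Filter ProbabilityTheory

namespace Rearrangement

noncomputable def distribFun (f : ℝ → ℝ) (c : ℝ) : ℝ≥0∞ :=
  volume {u ∈ Ioo (0:ℝ) 1 | c < f u}

variable {f g : ℝ → ℝ} {a b c t s₁ s₄ : ℝ}

lemma antitone_setOf_lt (f : ℝ → ℝ) : Antitone fun c : ℝ => {u ∈ Ioo (0:ℝ) 1 | c < f u} :=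
  fun _ _ h _ hu => ⟨hu.1, h.trans_lt hu.2⟩

lemma distribFun_antitone (f : ℝ → ℝ) : Antitone (distribFun f) := fun _ _ h =>
  measure_mono (antitone_setOf_lt f h)

lemma distribFun_le_one (f : ℝ → ℝ) (c : ℝ) : distribFun f c ≤ 1 :=
  (measure_mono fun _ hu => hu.1).trans_eq (by simp)

lemma distribFun_ne_top (f : ℝ → ℝ) (c : ℝ) : distribFun f c ≠ ⊤ :=
  ((distribFun_le_one f c).trans_lt one_lt_top).ne

lemma distribFun_eq_restrict (f : ℝ → ℝ) (c : ℝ) :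
    distribFun f c = volume.restrict (Ioo (0:ℝ) 1) {u | c < f u} := by
  rw [Measure.restrict_apply' measurableSet_Ioo, inter_comm]; rfl

lemma exists_ofReal_lt_distribFun (f : ℝ → ℝ) (ht : t < 1) :
    ∃ c, ENNReal.ofReal t < distribFun f c := by
  have hunion : ⋃ c : ℝ, {u ∈ Ioo (0:ℝ) 1 | c < f u} = Ioo 0 1 :=
    Subset.antisymm (iUnion_subset fun _ _ hu => hu.1)
      fun u hu => mem_iUnion.2 ⟨f u - 1, hu, by linarith⟩
  have hlim := tendsto_measure_iUnion_atBot (μ := volume) (antitone_setOf_lt f)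
  rw [hunion, Real.volume_Ioo, sub_zero] at hlim
  exact (hlim.eventually_const_lt (by simpa using ht)).exists

lemma exists_distribFun_le (hf : Measurable f) (ht : 0 < t) :
    ∃ c, distribFun f c ≤ ENNReal.ofReal t := by
  have hinter : ⋂ c : ℝ, {u ∈ Ioo (0:ℝ) 1 | c < f u} = ∅ :=
    eq_empty_of_forall_notMem fun u hu => lt_irrefl _ (mem_iInter.1 hu (f u)).2
  have hlim := tendsto_measure_iInter_atTop (μ := volume)
    (s := fun c : ℝ => {u ∈ Ioo (0:ℝ) 1 | c < f u})
    (fun _ => (measurableSet_Ioo.inter (hf measurableSet_Ioi)).nullMeasurableSet)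
    (antitone_setOf_lt f) ⟨0, distribFun_ne_top f 0⟩
  rw [hinter, measure_empty] at hlim
  exact (hlim.eventually_lt_const (by simpa using ht)).exists.imp fun _ => le_of_lt

lemma exists_gt_ofReal_lt_distribFun (h : ENNReal.ofReal t < distribFun f c) :
    ∃ c' > c, ENNReal.ofReal t < distribFun f c' := by
  have hunion : ⋃ n : ℕ, {u ∈ Ioo (0:ℝ) 1 | c + 1 / (n + 1) < f u} =
      {u ∈ Ioo (0:ℝ) 1 | c < f u} := by
    refine Subset.antisymm (iUnion_subset fun n u hu => ⟨hu.1, lt_trans ?_ hu.2⟩) fun u hu => ?_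
    · exact lt_add_of_pos_right c Nat.one_div_pos_of_nat
    · obtain ⟨n, hn⟩ := exists_nat_one_div_lt (sub_pos.2 hu.2)
      exact mem_iUnion.2 ⟨n, hu.1, by linarith⟩
  have hlim := tendsto_measure_iUnion_atTop (μ := volume)
    (s := fun n : ℕ => {u ∈ Ioo (0:ℝ) 1 | c + 1 / (n + 1) < f u})
    fun m n hmn => antitone_setOf_lt f (by gcongr : c + 1 / ((n : ℝ) + 1) ≤ c + 1 / (m + 1))
  rw [hunion] at hlim
  obtain ⟨n, hn⟩ := (hlim.eventually_const_lt h).exists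
  exact ⟨_, lt_add_of_pos_right c Nat.one_div_pos_of_nat, hn⟩

lemma bddBelow_setOf_distribFun_le (f : ℝ → ℝ) (ht : t < 1) :
    BddBelow {c | distribFun f c ≤ ENNReal.ofReal t} := by
  obtain ⟨c₀, hc₀⟩ := exists_ofReal_lt_distribFun f ht
  exact ⟨c₀, fun c hc => le_of_not_gt fun hlt =>
    lt_irrefl _ (hc₀.trans_le ((distribFun_antitone f hlt.le).trans hc))⟩

lemma lt_rr_iff (hf : Measurable f) (ht : t ∈ Ioo (0:ℝ) 1) :
    c < rr f t ↔ ENNReal.ofReal t < distribFun f c := by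
  refine ⟨fun h => lt_of_not_ge fun hle =>
    h.not_ge (csInf_le (bddBelow_setOf_distribFun_le f ht.2) hle), fun h => ?_⟩
  obtain ⟨c', hcc', hc'⟩ := exists_gt_ofReal_lt_distribFun h
  refine hcc'.trans_le (le_csInf (exists_distribFun_le hf ht.1) fun c'' hc'' => ?_)
  exact le_of_not_gt fun hlt =>
    lt_irrefl _ (hc'.trans_le ((distribFun_antitone f hlt.le).trans hc''))

lemma rr_antitoneOn (hf : Measurable f) : AntitoneOn (rr f) (Ioo (0:ℝ) 1) :=
  fun _ ht _ ht' htt' => le_of_forall_lt fun _ hc =>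
    (lt_rr_iff hf ht).2 ((ENNReal.ofReal_le_ofReal htt').trans_lt ((lt_rr_iff hf ht').1 hc))

lemma setOf_lt_rr (hf : Measurable f) (c : ℝ) :
    {t ∈ Ioo (0:ℝ) 1 | c < rr f t} = Ioo 0 (distribFun f c).toReal := by
  have hne := distribFun_ne_top f c
  have hle : (distribFun f c).toReal ≤ 1 :=
    ENNReal.toReal_le_of_le_ofReal zero_le_one (by simpa using distribFun_le_one f c)
  ext t
  refine ⟨fun ⟨ht, h⟩ => ⟨ht.1, ?_⟩, fun ⟨h0, h1⟩ => ⟨⟨h0, h1.trans_le hle⟩, ?_⟩⟩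
  · exact (ENNReal.ofReal_lt_iff_lt_toReal ht.1.le hne).1 ((lt_rr_iff hf ht).1 h)
  · exact (lt_rr_iff hf ⟨h0, h1.trans_le hle⟩).2 ((ENNReal.ofReal_lt_iff_lt_toReal h0.le hne).2 h1)

lemma distribFun_rr (hf : Measurable f) : distribFun (rr f) = distribFun f := by
  funext c
  rw [distribFun, setOf_lt_rr hf, Real.volume_Ioo, sub_zero,
    ENNReal.ofReal_toReal (distribFun_ne_top f c)]

lemma identDistrib_rr (hf : Measurable f) :
    IdentDistrib (rr f) f (volume.restrict (Ioo (0:ℝ) 1)) (volume.restrict (Ioo (0:ℝ) 1)) := by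
  have hrr : AEMeasurable (rr f) (volume.restrict (Ioo (0:ℝ) 1)) :=
    aemeasurable_restrict_of_antitoneOn measurableSet_Ioo (rr_antitoneOn hf)
  refine ⟨hrr, hf.aemeasurable, ext_of_generate_finite _
    (BorelSpace.measurable_eq.trans (borel_eq_generateFrom_Ioi ℝ)) isPiSystem_Ioi ?_ ?_⟩
  · rintro _ ⟨c, rfl⟩
    rw [Measure.map_apply_of_aemeasurable hrr measurableSet_Ioi,
      Measure.map_apply hf measurableSet_Ioi]
    exact (distribFun_eq_restrict _ c).symm.trans
      ((congrFun (distribFun_rr hf) c).trans (distribFun_eq_restrict f c))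
  · rw [Measure.map_apply_of_aemeasurable hrr MeasurableSet.univ,
      Measure.map_apply hf MeasurableSet.univ, preimage_univ, preimage_univ]

lemma rr_congr_ae (h : f =ᵐ[volume.restrict (Ioo (0:ℝ) 1)] g) : rr f = rr g := by
  have hdist : distribFun f = distribFun g := funext fun c => by
    rw [distribFun_eq_restrict, distribFun_eq_restrict]
    exact measure_congr (h.fun_comp fun v => c < v)
  funext t
  change sInf {c | distribFun f c ≤ _} = sInf {c | distribFun g c ≤ _}
  rw [hdist]

lemma integrableOn_rr (hf : Measurable f) (hfi : IntegrableOn f (Ioo (0:ℝ) 1)) :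
    IntegrableOn (rr f) (Ioo (0:ℝ) 1) :=
  (identDistrib_rr hf).integrable_iff.2 hfi

lemma setIntegral_rr (hf : Measurable f) :
    ∫ t in Ioo (0:ℝ) 1, rr f t = ∫ u in Ioo (0:ℝ) 1, f u :=
  (identDistrib_rr hf).integral_eq

lemma intervalIntegrable_rr (hf : Measurable f) (hfi : IntegrableOn f (Ioo (0:ℝ) 1))
    {s s' : ℝ} (hs : s ∈ Icc (0:ℝ) 1) (hs' : s' ∈ Icc (0:ℝ) 1) :
    IntervalIntegrable (rr f) volume s s' :=
  ((intervalIntegrable_iff_integrableOn_Ioo_of_le zero_le_one).2 (integrableOn_rr hf hfi)).mono_set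
    (uIcc_subset_uIcc (by simpa [uIcc_of_le zero_le_one] using hs)
      (by simpa [uIcc_of_le zero_le_one] using hs'))

lemma integral_Ioo_eq_intervalIntegral (F : ℝ → ℝ) {s s' : ℝ} (hs : s ≤ s') :
    ∫ t in Ioo s s', F t = ∫ t in s..s', F t := by
  rw [intervalIntegral.integral_of_le hs, integral_Ioc_eq_integral_Ioo]

lemma integral_rr_le_add_mul (hg : Measurable g) (hgi : IntegrableOn g (Ioo (0:ℝ) 1))
    (h01 : 0 < s₁) {s : ℝ} (hs : s ∈ Ico s₁ 1) :
    ∫ t in Ioo 0 s, rr g t ≤ (∫ t in Ioo 0 s₁, rr g t) + rr g s₁ * (s - s₁) := by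
  have hs₁ : s₁ ∈ Icc (0:ℝ) 1 := ⟨h01.le, hs.1.trans hs.2.le⟩
  have hs01 : s ∈ Icc (0:ℝ) 1 := ⟨h01.le.trans hs.1, hs.2.le⟩
  have hsplit := intervalIntegral.integral_add_adjacent_intervals
    (intervalIntegrable_rr hg hgi ⟨le_rfl, zero_le_one⟩ hs₁)
    (intervalIntegrable_rr hg hgi hs₁ hs01)
  have hmono : ∫ t in s₁..s, rr g t ≤ ∫ _ in s₁..s, rr g s₁ :=
    intervalIntegral.integral_mono_on hs.1 (intervalIntegrable_rr hg hgi hs₁ hs01)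
      intervalIntegrable_const fun t ht =>
        rr_antitoneOn hg ⟨h01, hs.1.trans_lt hs.2⟩ ⟨h01.trans_le ht.1, ht.2.trans_lt hs.2⟩ ht.1
  rw [intervalIntegral.integral_const, smul_eq_mul] at hmono
  rw [integral_Ioo_eq_intervalIntegral _ hs01.1, integral_Ioo_eq_intervalIntegral _ h01.le]
  linarith

def ModifiedWithin (S : Set ℝ) (f g : ℝ → ℝ) : Prop :=
  ∀ u, g u = f u ∨ (f u ∈ S ∧ g u ∈ S)

lemma distribFun_eq_of_modifiedWithin (hwin : ModifiedWithin (Ioc a b) f g)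
    (hc : c < a ∨ b ≤ c) : distribFun g c = distribFun f c := by
  unfold distribFun
  congr 1
  ext u
  refine and_congr_right fun _ => ?_
  rcases hwin u with h | ⟨hf, hg⟩
  · rw [h]
  · rcases hc with hc | hc
    · exact iff_of_true (hc.trans hg.1) (hc.trans hf.1)
    · exact iff_of_false (hg.2.trans hc).not_gt (hf.2.trans hc).not_gt

lemma rr_eq_of_modifiedWithin_of_lt (hwin : ModifiedWithin (Ioc a b) f g) (hf : Measurable f)
    (hg : Measurable g) (ht : t ∈ Ioo (0:ℝ) 1) (hb : b < rr f t) : rr g t = rr f t := by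
  have hgb : b < rr g t := by
    rw [lt_rr_iff hg ht, distribFun_eq_of_modifiedWithin hwin (Or.inr le_rfl), ← lt_rr_iff hf ht]
    exact hb
  refine eq_of_forall_lt_iff fun c => ?_
  rcases lt_or_ge c b with hc | hc
  · exact iff_of_true (hc.trans hgb) (hc.trans hb)
  · rw [lt_rr_iff hg ht, lt_rr_iff hf ht, distribFun_eq_of_modifiedWithin hwin (Or.inr hc)]

lemma rr_eq_of_modifiedWithin_of_gt (hwin : ModifiedWithin (Ioc a b) f g) (hf : Measurable f)
    (hg : Measurable g) (ht : t ∈ Ioo (0:ℝ) 1) (ha : rr f t < a) : rr g t = rr f t := by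
  obtain ⟨c₀, hc₀, hc₀a⟩ := exists_between ha
  have hga : rr g t < a := by
    refine lt_of_le_of_lt (not_lt.1 fun h => hc₀.not_ge ?_) hc₀a
    rw [lt_rr_iff hg ht, distribFun_eq_of_modifiedWithin hwin (Or.inl hc₀a),
      ← lt_rr_iff hf ht] at h
    exact h.le
  refine eq_of_forall_lt_iff fun c => ?_
  rcases lt_or_ge c a with hc | hc
  · rw [lt_rr_iff hg ht, lt_rr_iff hf ht, distribFun_eq_of_modifiedWithin hwin (Or.inl hc)]
  · exact iff_of_false (hga.trans_le hc).not_gt (ha.trans_le hc).not_gt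

lemma integral_rr_eq_of_modifiedWithin_of_le (hf : Measurable f) (hg : Measurable g)
    (hwin : ModifiedWithin (Ioc a b) f g)
    (hs₁ : s₁ ∈ Ioo (0:ℝ) 1) (hb : b < rr f s₁) {s : ℝ} (hs : s ≤ s₁) :
    ∫ t in Ioo 0 s, rr g t = ∫ t in Ioo 0 s, rr f t :=
  setIntegral_congr_fun measurableSet_Ioo fun t ht =>
    have ht' : t ∈ Ioo (0:ℝ) 1 := ⟨ht.1, ht.2.trans_le hs |>.trans hs₁.2⟩
    rr_eq_of_modifiedWithin_of_lt hwin hf hg ht'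
      (hb.trans_le (rr_antitoneOn hf ht' hs₁ (ht.2.le.trans hs)))

lemma integral_rr_eq_of_modifiedWithin_of_ge (hf : Measurable f) (hg : Measurable g)
    (hfi : IntegrableOn f (Ioo (0:ℝ) 1)) (hgi : IntegrableOn g (Ioo (0:ℝ) 1))
    (hwin : ModifiedWithin (Ioc a b) f g)
    (hmean : ∫ u in Ioo (0:ℝ) 1, g u = ∫ u in Ioo (0:ℝ) 1, f u)
    (hs₄ : s₄ ∈ Ioo (0:ℝ) 1) (ha : rr f s₄ < a) {s : ℝ} (hs : s ∈ Icc s₄ 1) :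
    ∫ t in Ioo 0 s, rr g t = ∫ t in Ioo 0 s, rr f t := by
  have hs01 : s ∈ Icc (0:ℝ) 1 := ⟨hs₄.1.le.trans hs.1, hs.2⟩
  have hzero : (0:ℝ) ∈ Icc (0:ℝ) 1 := ⟨le_rfl, zero_le_one⟩
  have hone : (1:ℝ) ∈ Icc (0:ℝ) 1 := ⟨zero_le_one, le_rfl⟩
  have htail : ∫ t in Ioo s 1, rr g t = ∫ t in Ioo s 1, rr f t :=
    setIntegral_congr_fun measurableSet_Ioo fun t ht =>
      have ht' : t ∈ Ioo (0:ℝ) 1 := ⟨hs₄.1.trans_le (hs.1.trans ht.1.le), ht.2⟩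
      rr_eq_of_modifiedWithin_of_gt hwin hf hg ht'
        ((rr_antitoneOn hf hs₄ ht' (hs.1.trans ht.1.le)).trans_lt ha)
  -- the totals agree because `rr` preserves integrals; subtracting the equal tails gives the claim
  have htotal : ∫ t in Ioo 0 1, rr g t = ∫ t in Ioo 0 1, rr f t := by
    rw [setIntegral_rr hg, setIntegral_rr hf, hmean]
  rw [integral_Ioo_eq_intervalIntegral _ hs.2, integral_Ioo_eq_intervalIntegral _ hs.2] at htail
  rw [integral_Ioo_eq_intervalIntegral _ zero_le_one,
    integral_Ioo_eq_intervalIntegral _ zero_le_one] at htotal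
  rw [integral_Ioo_eq_intervalIntegral _ hs01.1, integral_Ioo_eq_intervalIntegral _ hs01.1]
  have hsplit_g := intervalIntegral.integral_add_adjacent_intervals
    (intervalIntegrable_rr hg hgi hzero hs01) (intervalIntegrable_rr hg hgi hs01 hone)
  have hsplit_f := intervalIntegral.integral_add_adjacent_intervals
    (intervalIntegrable_rr hf hfi hzero hs01) (intervalIntegrable_rr hf hfi hs01 hone)
  linarith

lemma maj_of_modifiedWithin {y : ℝ → ℝ} (hf : Measurable f) (hg : Measurable g)
    (hfi : IntegrableOn f (Ioo (0:ℝ) 1)) (hgi : IntegrableOn g (Ioo (0:ℝ) 1))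
    (hwin : ModifiedWithin (Ioc a b) f g)
    (hmean : ∫ u in Ioo (0:ℝ) 1, g u = ∫ u in Ioo (0:ℝ) 1, f u)
    (h01 : 0 < s₁) (h14 : s₁ ≤ s₄) (h41 : s₄ < 1) (ha : rr f s₄ < a) (hb : b < rr f s₁)
    (hmaj : Maj f y)
    (hbound : ∀ s ∈ Icc s₁ s₄,
      (∫ t in Ioo (0:ℝ) s₁, rr f t) + rr f s₁ * (s - s₁) ≤ ∫ t in Ioo (0:ℝ) s, rr y t) :
    Maj g y := by
  have hs₁ : s₁ ∈ Ioo (0:ℝ) 1 := ⟨h01, h14.trans_lt h41⟩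
  have hs₄ : s₄ ∈ Ioo (0:ℝ) 1 := ⟨h01.trans_le h14, h41⟩
  refine ⟨fun s hs => ?_, ?_⟩
  · rcases le_or_gt s s₁ with hs1 | hs1
    · rw [integral_rr_eq_of_modifiedWithin_of_le hf hg hwin hs₁ hb hs1]
      exact hmaj.1 s hs
    rcases le_or_gt s s₄ with hs4 | hs4
    · calc ∫ t in Ioo 0 s, rr g t ≤ (∫ t in Ioo 0 s₁, rr g t) + rr g s₁ * (s - s₁) :=
            integral_rr_le_add_mul hg hgi h01 ⟨hs1.le, hs.2⟩
        _ = (∫ t in Ioo 0 s₁, rr f t) + rr f s₁ * (s - s₁) := by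
            rw [integral_rr_eq_of_modifiedWithin_of_le hf hg hwin hs₁ hb le_rfl,
              rr_eq_of_modifiedWithin_of_lt hwin hf hg hs₁ hb]
        _ ≤ ∫ t in Ioo 0 s, rr y t := hbound s ⟨hs1.le, hs4⟩
    · rw [integral_rr_eq_of_modifiedWithin_of_ge hf hg hfi hgi hwin hmean hs₄ ha
        ⟨hs4.le, hs.2.le⟩]
      exact hmaj.1 s hs
  · rw [integral_rr_eq_of_modifiedWithin_of_ge hf hg hfi hgi hwin hmean hs₄ ha ⟨h41.le, le_rfl⟩]
    exact hmaj.2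

lemma exists_mean_zero_of_disjoint {A B : Set ℝ} (hA : MeasurableSet A) (hB : MeasurableSet B)
    (hAI : A ⊆ Ioo 0 1) (hBI : B ⊆ Ioo 0 1) (hAB : Disjoint A B)
    (hA0 : 0 < volume A) (hB0 : 0 < volume B) {η : ℝ} (hη : 0 < η) :
    ∃ h : ℝ → ℝ, Measurable h ∧ IntegrableOn h (Ioo (0:ℝ) 1) ∧ ∫ u in Ioo (0:ℝ) 1, h u = 0 ∧
      ¬ h =ᵐ[volume.restrict (Ioo (0:ℝ) 1)] 0 ∧ Function.support h ⊆ A ∪ B ∧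
      ∀ u, |h u| ≤ η := by
  have hrestrict : ∀ {S : Set ℝ}, MeasurableSet S → S ⊆ Ioo 0 1 →
      (volume.restrict (Ioo (0:ℝ) 1)).real S = volume.real S := fun hS hSI => by
    rw [measureReal_restrict_apply hS, inter_eq_self_of_subset_left hSI]
  have hle_one : ∀ {S : Set ℝ}, S ⊆ Ioo 0 1 → volume.real S ≤ 1 := fun hSI =>
    (measureReal_mono hSI (by simp)).trans_eq (by simp)
  set α := volume.real A
  set β := volume.real B
  have hβ : 0 < β := ENNReal.toReal_pos hB0.ne' (measure_ne_top_of_subset hBI (by simp))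
  have hηβ : η * β ≤ η := mul_le_of_le_one_right hη.le (hle_one hBI)
  have hηα : η * α ≤ η := mul_le_of_le_one_right hη.le (hle_one hAI)
  have hηα₀ : 0 ≤ η * α := mul_nonneg hη.le measureReal_nonneg
  have hconst : ∀ c : ℝ, IntegrableOn (fun _ => c) (Ioo (0:ℝ) 1) :=
    fun _ => integrableOn_const (by simp)
  refine ⟨fun u => A.indicator (fun _ => η * β) u - B.indicator (fun _ => η * α) u,
    (measurable_const.indicator hA).sub (measurable_const.indicator hB),
    ((hconst _).indicator hA).sub ((hconst _).indicator hB), ?_, fun hae => ?_,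
    fun u hu => ?_, fun u => ?_⟩
  · rw [integral_sub ((hconst _).indicator hA) ((hconst _).indicator hB),
      integral_indicator_const _ hA, integral_indicator_const _ hB, hrestrict hA hAI,
      hrestrict hB hBI, smul_eq_mul, smul_eq_mul]
    ring
  · have hnull : volume.restrict (Ioo (0:ℝ) 1) A = 0 :=
      measure_eq_zero_iff_ae_notMem.2 <| Eventually.mono hae fun u hu huA =>
        (mul_pos hη hβ).ne' (by simpa [huA, disjoint_left.1 hAB huA] using hu)
    rw [Measure.restrict_apply hA, inter_eq_self_of_subset_left hAI] at hnull
    exact hA0.ne' hnull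
  · by_contra hu'
    simp [not_or.1 hu'] at hu
  · classical
    simp only [indicator_apply]
    split_ifs <;> rw [abs_le] <;> constructor <;> linarith [mul_pos hη hβ]

lemma volume_preimage_Ioc_pos (hf : Measurable f) (ht : t ∈ Ioo (0:ℝ) 1)
    (ha : a < rr f t) (hb : rr f t < b) : 0 < volume (Ioo (0:ℝ) 1 ∩ f ⁻¹' Ioc a b) := by
  have hcover : distribFun f a ≤ volume (Ioo (0:ℝ) 1 ∩ f ⁻¹' Ioc a b) + distribFun f b := by
    refine (measure_mono fun u hu => ?_).trans (measure_union_le _ _)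
    by_cases hub : f u ≤ b
    · exact Or.inl ⟨hu.1, hu.2, hub⟩
    · exact Or.inr ⟨hu.1, not_le.1 hub⟩
  refine pos_iff_ne_zero.2 fun h0 => ?_
  rw [h0, zero_add] at hcover
  exact (lt_rr_iff hf ht).not.1 hb.not_gt (((lt_rr_iff hf ht).1 ha).trans_le hcover)

lemma exists_perturbation_modifiedWithin (hf : Measurable f) {t₂ t₃ : ℝ}
    (ht₂ : t₂ ∈ Ioo (0:ℝ) 1) (ht₃ : t₃ ∈ Ioo (0:ℝ) 1)
    (ha : a < rr f t₃) (h32 : rr f t₃ < rr f t₂) (hb : rr f t₂ < b) :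
    ∃ h : ℝ → ℝ, Measurable h ∧ IntegrableOn h (Ioo (0:ℝ) 1) ∧ ∫ u in Ioo (0:ℝ) 1, h u = 0 ∧
      ¬ h =ᵐ[volume.restrict (Ioo (0:ℝ) 1)] 0 ∧
      ModifiedWithin (Ioc a b) f (f + h) ∧ ModifiedWithin (Ioc a b) f (f - h) := by
  obtain ⟨a', haa', ha'⟩ := exists_between ha
  obtain ⟨m, hm₃, hm₂⟩ := exists_between h32
  obtain ⟨b', hb', hb'b⟩ := exists_between hb
  have hdisj : Disjoint (Ioo (0:ℝ) 1 ∩ f ⁻¹' Ioc m b') (Ioo (0:ℝ) 1 ∩ f ⁻¹' Ioc a' m) :=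
    disjoint_left.2 fun _ hA hB => hA.2.1.not_ge hB.2.2
  obtain ⟨h, hmeas, hi, h0, hne, hsupp, hη⟩ := exists_mean_zero_of_disjoint
    (measurableSet_Ioo.inter (hf measurableSet_Ioc))
    (measurableSet_Ioo.inter (hf measurableSet_Ioc)) inter_subset_left inter_subset_left hdisj
    (volume_preimage_Ioc_pos hf ht₂ hm₂ hb') (volume_preimage_Ioc_pos hf ht₃ ha' hm₃)
    (η := min (a' - a) (b - b')) (lt_min (sub_pos.2 haa') (sub_pos.2 hb'b))
  have hband : ∀ u, h u ≠ 0 → f u ∈ Ioc a b ∧ f u + h u ∈ Ioc a b ∧ f u - h u ∈ Ioc a b := by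
    intro u hu
    have hfu : a' < f u ∧ f u ≤ b' := by
      rcases hsupp hu with hA | hB
      · exact ⟨by linarith [hA.2.1], hA.2.2⟩
      · exact ⟨hB.2.1, by linarith [hB.2.2]⟩
    obtain ⟨hlow, hhigh⟩ := abs_le.1 (hη u)
    have hηa := min_le_left (a' - a) (b - b')
    have hηb := min_le_right (a' - a) (b - b')
    refine ⟨⟨?_, ?_⟩, ⟨?_, ?_⟩, ⟨?_, ?_⟩⟩ <;> linarith
  refine ⟨h, hmeas, hi, h0, hne, fun u => ?_, fun u => ?_⟩ <;>
    rcases eq_or_ne (h u) 0 with hu | hu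
  · exact Or.inl (by simp [hu])
  · exact Or.inr ⟨(hband u hu).1, (hband u hu).2.1⟩
  · exact Or.inl (by simp [hu])
  · exact Or.inr ⟨(hband u hu).1, (hband u hu).2.2⟩

end Rearrangement

open Rearrangement

theorem not_extreme_of_flat_bound_general (y x : ℝ → ℝ)
    (hx : x ∈ Omega y)
    (s₁ s₂ s₃ s₄ : ℝ)
    (h01 : 0 < s₁) (h12 : s₁ < s₂) (h23 : s₂ < s₃) (h34 : s₃ < s₄) (h41 : s₄ < 1)
    (hdrop : rr x s₂ < rr x s₁ ∧ rr x s₃ < rr x s₂ ∧ rr x s₄ < rr x s₃)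
    (hbound : ∀ s ∈ Icc s₁ s₄,
      (∫ t in Ioo (0:ℝ) s₁, rr x t) + rr x s₁ * (s - s₁) ≤ ∫ t in Ioo (0:ℝ) s, rr y t) :
    ¬ ExtremePt (Omega y) x := by
  rintro ⟨-, hext⟩
  obtain ⟨hxi, hmaj⟩ := hx
  obtain ⟨f, hf, hxf⟩ := hxi.aestronglyMeasurable.aemeasurable
  have hfi : IntegrableOn f (Ioo (0:ℝ) 1) := hxi.congr hxf
  rw [Maj, rr_congr_ae hxf] at hmaj
  rw [rr_congr_ae hxf] at hdrop hbound
  obtain ⟨h12', h23', h34'⟩ := hdrop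
  obtain ⟨a, ha₄, ha₃⟩ := exists_between h34'
  obtain ⟨b, hb₂, hb₁⟩ := exists_between h12'
  obtain ⟨h, hm, hi, h0, hne, hplus, hminus⟩ := exists_perturbation_modifiedWithin hf
    ⟨h01.trans h12, h23.trans (h34.trans h41)⟩ ⟨h01.trans (h12.trans h23), h34.trans h41⟩
    ha₃ h23' hb₂
  have hmem : ∀ g, Measurable g → IntegrableOn g (Ioo (0:ℝ) 1) →
      ∫ u in Ioo (0:ℝ) 1, g u = ∫ u in Ioo (0:ℝ) 1, f u →
      ModifiedWithin (Ioc a b) f g → g ∈ Omega y := fun g hg hgi hmean hgf =>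
    ⟨hgi, maj_of_modifiedWithin hf hg hfi hgi hgf hmean h01 (h12.trans h23 |>.trans h34).le h41
      ha₄ hb₁ hmaj hbound⟩
  have hsplit := hext _ (hmem _ (hf.add hm) (hfi.add hi)
      (by rw [integral_add' hfi hi, h0, add_zero]) hplus)
    _ (hmem _ (hf.sub hm) (hfi.sub hi) (by rw [integral_sub' hfi hi, h0, sub_zero]) hminus)
    (hxf.mono fun u hu => by simp only [Pi.add_apply, Pi.sub_apply, hu]; ring)
  exact hne (hsplit.mono fun u hu => by
    simp only [Pi.add_apply, Pi.sub_apply, Pi.zero_apply] at hu ⊢; linarith)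

theorem not_extreme_of_flat_bound (y x : ℝ → ℝ)
    (hy : IntegrableOn y (Ioo (0:ℝ) 1)) (hx : x ∈ Omega y)
    (s₁ s₂ s₃ s₄ : ℝ)
    (h01 : 0 < s₁) (h12 : s₁ < s₂) (h23 : s₂ < s₃) (h34 : s₃ < s₄) (h41 : s₄ < 1)
    (hdrop : rr x s₂ < rr x s₁ ∧ rr x s₃ < rr x s₂ ∧ rr x s₄ < rr x s₃)
    (hbound : ∀ s ∈ Icc s₁ s₄,
      (∫ t in Ioo (0:ℝ) s₁, rr x t) + rr x s₁ * (s - s₁) ≤ ∫ t in Ioo (0:ℝ) s, rr y t) :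
    ¬ ExtremePt (Omega y) x :=
  not_extreme_of_flat_bound_general y x hx s₁ s₂ s₃ s₄ h01 h12 h23 h34 h41 hdrop hbound
end

section
/- Let f : (0,1) → ℝ be integrable and let A ⊂ (0,1) be measurable with m(A) = s ∈ (0,1) such that its indicator χ_A satisfies ∫ f·χ_A dm = ∫₀ˢ λ(t; f) dt. Then, up to null sets, {f > λ(s; f)} ⊆ A ⊆ {f ≥ λ(s; f)}. -/
open MeasureTheory Set

/-! Put `λ = rr f` and `c = λ s`. The function `λ` is equimeasurable with `f`, so the layer-cake
formula gives `∫ (λ - c)⁺ = ∫ (f - c)⁺`; since `λ` is nonincreasing, `λ - c` is nonnegative on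
`(0, s)` and nonpositive on `[s, 1)`, whence `∫₀ˢ λ = s c + ∫ (f - c)⁺`. On the other hand
`∫_A (f - c) = ∫ (f - c)⁺ - ∫_{(0,1) \ A} (f - c)⁺ - ∫_A (f - c)⁻`, so the optimality of `A`
forces the two subtracted integrals to vanish: `f ≤ c` a.e. off `A` and `f ≥ c` a.e. on `A`. -/

open Filter Topology
open scoped ENNReal

section DistributionFunction

variable {α : Type*} [MeasurableSpace α] {μ : Measure α} {f : α → ℝ}

theorem exists_pos_lt_measure_add_lt {y : ℝ} {a : ℝ≥0∞} (h : a < μ {x | y < f x}) :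
    ∃ ε > 0, a < μ {x | y + ε < f x} := by
  have hmono : Monotone fun n : ℕ => {x | y + 1 / ((n : ℝ) + 1) < f x} := by
    intro n m hnm x (hx : y + 1 / ((n : ℝ) + 1) < f x)
    show y + 1 / ((m : ℝ) + 1) < f x
    linarith [Nat.one_div_le_one_div (α := ℝ) hnm]
  have hunion : ⋃ n : ℕ, {x | y + 1 / ((n : ℝ) + 1) < f x} = {x | y < f x} := by
    ext x
    simp only [mem_iUnion, mem_ofPred_eq]
    refine ⟨fun ⟨n, hn⟩ => lt_trans (lt_add_of_pos_right y Nat.one_div_pos_of_nat) hn,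
      fun hx => ?_⟩
    obtain ⟨n, hn⟩ := exists_nat_one_div_lt (sub_pos.mpr hx)
    exact ⟨n, by linarith⟩
  rw [← hunion, hmono.measure_iUnion, lt_iSup_iff] at h
  obtain ⟨n, hn⟩ := h
  exact ⟨1 / ((n : ℝ) + 1), Nat.one_div_pos_of_nat, hn⟩

theorem tendsto_measure_lt_atTop [IsFiniteMeasure μ] (hf : AEMeasurable f μ) :
    Tendsto (fun y => μ {x | y < f x}) atTop (𝓝 0) := by
  have h := tendsto_measure_iInter_atTop (μ := μ) (s := fun y : ℝ => {x | y < f x})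
    (fun _ => nullMeasurableSet_lt aemeasurable_const hf)
    (fun _ _ hab _ hx => lt_of_le_of_lt hab hx) ⟨0, measure_ne_top _ _⟩
  have hempty : ⋂ y : ℝ, {x | y < f x} = ∅ :=
    eq_empty_of_forall_notMem fun x hx => lt_irrefl (f x) (mem_iInter.mp hx (f x))
  rwa [hempty, measure_empty] at h

variable (μ f) in
theorem tendsto_measure_lt_atBot :
    Tendsto (fun y => μ {x | y < f x}) atBot (𝓝 (μ univ)) := by
  have h := tendsto_measure_iUnion_atBot (μ := μ) (s := fun y : ℝ => {x | y < f x})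
    (fun _ _ hab _ hx => lt_of_le_of_lt hab hx)
  have hunion : ⋃ y : ℝ, {x | y < f x} = univ :=
    eq_univ_of_forall fun x => mem_iUnion.mpr ⟨f x - 1, sub_one_lt (f x)⟩
  rwa [hunion] at h

theorem lintegral_ofReal_sub_eq_lintegral_measure_lt (hf : AEMeasurable f μ) (c : ℝ) :
    ∫⁻ x, ENNReal.ofReal (f x - c) ∂μ = ∫⁻ t in Ioi 0, μ {x | c + t < f x} := by
  calc ∫⁻ x, ENNReal.ofReal (f x - c) ∂μ = ∫⁻ x, ENNReal.ofReal (max (f x - c) 0) ∂μ := by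
        simp
    _ = ∫⁻ t in Ioi 0, μ {x | t < max (f x - c) 0} :=
        lintegral_eq_lintegral_meas_lt μ (ae_of_all _ fun _ => le_max_right _ _)
          ((hf.sub_const c).max aemeasurable_const)
    _ = ∫⁻ t in Ioi 0, μ {x | c + t < f x} := by
        refine setLIntegral_congr_fun measurableSet_Ioi fun t (ht : 0 < t) => ?_
        congr 1
        ext x
        simp only [mem_ofPred_eq, lt_max_iff, ht.not_gt, or_false]
        constructor <;> intro h <;> linarith

theorem lintegral_ofReal_sub_eq_of_measure_lt_eq {β : Type*} [MeasurableSpace β]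
    {ν : Measure β} {g : β → ℝ} (hf : AEMeasurable f μ) (hg : AEMeasurable g ν)
    (h : ∀ y, μ {x | y < f x} = ν {x | y < g x}) (c : ℝ) :
    ∫⁻ x, ENNReal.ofReal (f x - c) ∂μ = ∫⁻ x, ENNReal.ofReal (g x - c) ∂ν := by
  simp only [lintegral_ofReal_sub_eq_lintegral_measure_lt hf,
    lintegral_ofReal_sub_eq_lintegral_measure_lt hg, h]

theorem measure_inter_pos_eq_zero_of_setIntegral_eq_zero {T : Set α} {k : α → ℝ}
    (hk : IntegrableOn k T μ) (hk0 : 0 ≤ k) (hint : ∫ x in T, k x ∂μ = 0) :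
    μ (T ∩ {x | 0 < k x}) = 0 := by
  have hae := (setIntegral_eq_zero_iff_of_nonneg_ae (ae_of_all _ hk0) hk).mp hint
  rw [inter_comm]
  exact Measure.measure_inter_eq_zero_of_restrict
    (measure_mono_null (fun x (hx : 0 < k x) => hx.ne') (ae_iff.mp hae))

theorem measure_diff_eq_zero_of_integral_max_le {S A : Set α} {h : α → ℝ}
    (hh : IntegrableOn h S μ) (hA : MeasurableSet A) (hAS : A ⊆ S)
    (hle : ∫ x in S, max (h x) 0 ∂μ ≤ ∫ x in A, h x ∂μ) :
    μ ({x ∈ S | 0 < h x} \ A) = 0 ∧ μ (A \ {x ∈ S | 0 ≤ h x}) = 0 := by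
  have hpos : IntegrableOn (fun x => max (h x) 0) S μ := hh.pos_part
  have hneg : IntegrableOn (fun x => max (-h x) 0) S μ := hh.neg_part
  have hsplit : ∫ x in A, max (h x) 0 ∂μ + ∫ x in S \ A, max (h x) 0 ∂μ
      = ∫ x in S, max (h x) 0 ∂μ := by
    simpa only [inter_eq_right.mpr hAS] using integral_inter_add_sdiff hA hpos
  have hdecomp : ∫ x in A, h x ∂μ
      = ∫ x in A, max (h x) 0 ∂μ - ∫ x in A, max (-h x) 0 ∂μ := by
    rw [← integral_sub (hpos.mono_set hAS) (hneg.mono_set hAS)]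
    congr 1 with x
    rcases le_total 0 (h x) with hx | hx <;> simp [hx]
  have hoff_nonneg : 0 ≤ ∫ x in S \ A, max (h x) 0 ∂μ := integral_nonneg fun _ => le_max_right _ _
  have hon_nonneg : 0 ≤ ∫ x in A, max (-h x) 0 ∂μ := integral_nonneg fun _ => le_max_right _ _
  have hoff : ∫ x in S \ A, max (h x) 0 ∂μ = 0 := by linarith
  have hon : ∫ x in A, max (-h x) 0 ∂μ = 0 := by linarith
  constructor
  · refine measure_mono_null ?_ (measure_inter_pos_eq_zero_of_setIntegral_eq_zero
      (hpos.mono_set sdiff_subset) (fun _ => le_max_right _ _) hoff)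
    rintro x ⟨⟨hxS, hx⟩, hxA⟩
    exact ⟨⟨hxS, hxA⟩, lt_max_of_lt_left hx⟩
  · refine measure_mono_null ?_ (measure_inter_pos_eq_zero_of_setIntegral_eq_zero
      (hneg.mono_set hAS) (fun _ => le_max_right _ _) hon)
    rintro x ⟨hxA, hx⟩
    exact ⟨hxA, lt_max_of_lt_left (neg_pos.mpr (lt_of_not_ge fun h0 => hx ⟨hAS hxA, h0⟩))⟩

end DistributionFunction

section Rearrangement

variable {f : ℝ → ℝ}

theorem rr_eq_sInf (t : ℝ) :
    rr f t = sInf {y | volume.restrict (Ioo (0:ℝ) 1) {u | y < f u} ≤ ENNReal.ofReal t} := by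
  simp only [rr, Measure.restrict_apply' measurableSet_Ioo, inter_comm]
  rfl

theorem lt_rr_iff (hf : AEMeasurable f (volume.restrict (Ioo (0:ℝ) 1))) {t y : ℝ}
    (ht : t ∈ Ioo (0:ℝ) 1) :
    y < rr f t ↔ ENNReal.ofReal t < volume.restrict (Ioo (0:ℝ) 1) {u | y < f u} := by
  set D := fun y => volume.restrict (Ioo (0:ℝ) 1) {u | y < f u}
  have hD : Antitone D := fun a b hab => measure_mono fun u (hu : b < f u) => hab.trans_lt hu
  have hne : {y | D y ≤ ENNReal.ofReal t}.Nonempty :=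
    ((tendsto_measure_lt_atTop hf).eventually
      (gt_mem_nhds (ENNReal.ofReal_pos.mpr ht.1))).exists.imp fun _ => le_of_lt
  have hbdd : BddBelow {y | D y ≤ ENNReal.ofReal t} := by
    have hlt : ENNReal.ofReal t < volume.restrict (Ioo (0:ℝ) 1) univ := by
      simpa [Real.volume_Ioo] using ht.2
    obtain ⟨r, hr⟩ := ((tendsto_measure_lt_atBot _ f).eventually (lt_mem_nhds hlt)).exists
    exact ⟨r, fun y hy => le_of_not_gt fun hyr => (hr.trans_le (hD hyr.le)).not_ge hy⟩
  rw [rr_eq_sInf]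
  constructor
  · exact fun hy => lt_of_not_ge fun hle => (csInf_le hbdd hle).not_gt hy
  · intro hy
    obtain ⟨ε, hε, hlt⟩ := exists_pos_lt_measure_add_lt hy
    refine (lt_add_of_pos_right y hε).trans_le (le_csInf hne fun r hr => ?_)
    exact le_of_not_gt fun hr' => (hlt.trans_le (hD hr'.le)).not_ge hr

theorem rr_antitoneOn (hf : AEMeasurable f (volume.restrict (Ioo (0:ℝ) 1))) :
    AntitoneOn (rr f) (Ioo 0 1) := fun _ ht _ ht' htt' =>
  le_of_forall_lt fun _ hy =>
    (lt_rr_iff hf ht).mpr ((ENNReal.ofReal_le_ofReal htt').trans_lt ((lt_rr_iff hf ht').mp hy))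

theorem measure_lt_rr_eq (hf : AEMeasurable f (volume.restrict (Ioo (0:ℝ) 1))) (y : ℝ) :
    volume.restrict (Ioo (0:ℝ) 1) {t | y < rr f t}
      = volume.restrict (Ioo (0:ℝ) 1) {u | y < f u} := by
  set D := volume.restrict (Ioo (0:ℝ) 1) {u | y < f u}
  have hD : D ≤ 1 := (measure_mono (subset_univ _)).trans_eq (by simp [Real.volume_Ioo])
  have hDtop : D ≠ ⊤ := ne_top_of_le_ne_top ENNReal.one_ne_top hD
  have hset : {t | y < rr f t} ∩ Ioo 0 1 = Ioo 0 D.toReal := by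
    ext t
    simp only [mem_inter_iff, mem_ofPred_eq, mem_Ioo]
    constructor
    · rintro ⟨hy, ht⟩
      exact ⟨ht.1, (ENNReal.ofReal_lt_iff_lt_toReal ht.1.le hDtop).mp ((lt_rr_iff hf ht).mp hy)⟩
    · rintro ⟨h0, htD⟩
      have ht1 : t < 1 :=
        htD.trans_le (ENNReal.toReal_le_of_le_ofReal zero_le_one (by simpa using hD))
      refine ⟨(lt_rr_iff hf ⟨h0, ht1⟩).mpr ?_, h0, ht1⟩
      exact (ENNReal.ofReal_lt_iff_lt_toReal h0.le hDtop).mpr htD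
  rw [Measure.restrict_apply' measurableSet_Ioo, hset, Real.volume_Ioo, sub_zero,
    ENNReal.ofReal_toReal hDtop]

theorem lintegral_ofReal_rr_sub (hf : AEMeasurable f (volume.restrict (Ioo (0:ℝ) 1))) (c : ℝ) :
    ∫⁻ t in Ioo 0 1, ENNReal.ofReal (rr f t - c) = ∫⁻ u in Ioo 0 1, ENNReal.ofReal (f u - c) :=
  lintegral_ofReal_sub_eq_of_measure_lt_eq
    (aemeasurable_restrict_of_antitoneOn measurableSet_Ioo (rr_antitoneOn hf)) hf
    (measure_lt_rr_eq hf) c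

theorem setIntegral_Ioo_rr (hf : IntegrableOn f (Ioo 0 1)) {s : ℝ} (hs : s ∈ Ioo (0:ℝ) 1) :
    ∫ t in Ioo 0 s, rr f t = s * rr f s + ∫ u in Ioo 0 1, max (f u - rr f s) 0 := by
  set c := rr f s
  have hmeas : AEMeasurable f (volume.restrict (Ioo (0:ℝ) 1)) := hf.aemeasurable
  have hsub : Ioo 0 s ⊆ Ioo (0:ℝ) 1 := Ioo_subset_Ioo_right hs.2.le
  have hge : ∀ t ∈ Ioo 0 s, 0 ≤ rr f t - c := fun t ht =>
    sub_nonneg.mpr (rr_antitoneOn hmeas (hsub ht) hs ht.2.le)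
  have hle : ∀ t ∈ Ico s 1, ENNReal.ofReal (rr f t - c) = 0 := fun t ht =>
    ENNReal.ofReal_eq_zero.mpr
      (sub_nonpos.mpr (rr_antitoneOn hmeas hs ⟨hs.1.trans_le ht.1, ht.2⟩ ht.1))
  have hlint : ∫⁻ t in Ioo 0 s, ENNReal.ofReal (rr f t - c)
      = ∫⁻ u in Ioo 0 1, ENNReal.ofReal (f u - c) := by
    rw [← lintegral_ofReal_rr_sub hmeas, ← Ioo_union_Ico_eq_Ioo hs.1 hs.2.le,
      lintegral_union measurableSet_Ico (disjoint_left.mpr fun t h1 h2 => h1.2.not_ge h2.1),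
      setLIntegral_congr_fun measurableSet_Ico hle, lintegral_zero, add_zero]
  have hfc : IntegrableOn (fun u => f u - c) (Ioo 0 1) := hf.sub (integrableOn_const (by simp))
  have hge_ae : 0 ≤ᵐ[volume.restrict (Ioo 0 s)] fun t => rr f t - c :=
    (ae_restrict_iff' measurableSet_Ioo).mpr (ae_of_all _ hge)
  have hint : IntegrableOn (fun t => rr f t - c) (Ioo 0 s) :=
    ⟨(((aemeasurable_restrict_of_antitoneOn measurableSet_Ioo (rr_antitoneOn hmeas)).mono_set
        hsub).sub_const c).aestronglyMeasurable,
      (hasFiniteIntegral_iff_ofReal hge_ae).mpr (hlint ▸ hfc.lintegral_lt_top)⟩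
  calc ∫ t in Ioo 0 s, rr f t = ∫ t in Ioo 0 s, (c + (rr f t - c)) := by simp
    _ = s * c + ∫ t in Ioo 0 s, (rr f t - c) := by
      have hconst : IntegrableOn (fun _ => c) (Ioo 0 s) := integrableOn_const (by simp)
      rw [integral_add hconst hint, setIntegral_const]
      simp [hs.1.le]
    _ = s * c + ∫ u in Ioo 0 1, max (f u - c) 0 := by
      rw [integral_eq_lintegral_of_nonneg_ae hge_ae hint.aestronglyMeasurable, hlint,
        integral_eq_lintegral_of_nonneg_ae (f := fun u => max (f u - c) 0)
          (ae_of_all _ fun _ => le_max_right _ _)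
          hfc.pos_part.aestronglyMeasurable]
      simp

end Rearrangement

theorem optimal_set_sandwich (f : ℝ → ℝ) (hf : IntegrableOn f (Ioo (0:ℝ) 1))
    (s : ℝ) (hs : s ∈ Ioo (0:ℝ) 1)
    (A : Set ℝ) (hA : MeasurableSet A) (hAsub : A ⊆ Ioo (0:ℝ) 1)
    (hAm : volume A = ENNReal.ofReal s)
    (hopt : (∫ u in A, f u) = ∫ t in Ioo (0:ℝ) s, rr f t) :
    volume ({u ∈ Ioo (0:ℝ) 1 | rr f s < f u} \ A) = 0 ∧
      volume (A \ {u ∈ Ioo (0:ℝ) 1 | rr f s ≤ f u}) = 0 := by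
  have hAfin : volume A ≠ ⊤ := by simp [hAm]
  have hfc : IntegrableOn (fun u => f u - rr f s) (Ioo 0 1) :=
    hf.sub (integrableOn_const (by simp))
  have hkey : ∫ u in Ioo 0 1, max (f u - rr f s) 0 ≤ ∫ u in A, (f u - rr f s) := by
    rw [integral_sub (hf.mono_set hAsub) (integrableOn_const hAfin), setIntegral_const, hopt,
      setIntegral_Ioo_rr hf hs]
    simp [measureReal_def, hAm, hs.1.le]
  simpa only [sub_pos, sub_nonneg] using measure_diff_eq_zero_of_integral_max_le hfc hA hAsub hkey
end
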